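/- arXiv:1512.07985 — 2 statements merged into one kernel-verified Lean document; each statement's English description precedes it below -/
import Mathlib

section
/- Let y ∈ ℝ, a > 0, and suppose φ : [y-a, y+a] → ℝ is continuously differentiable with |φ'(z)| ≥ C/2 > 0 for all z in [y-a, y+a]. Then |∫_{y-a}^{y+a} exp(-(z-y)^2/(4h)) · exp(i φ(z)/h) dz| = O(h) as h → 0⁺. -/
/-!
Write the integrand as `g e^{iφ/h}` with `e^{iφ/h} = (h / i) (1/φ') (e^{iφ/h})'` and integrate by
parts once against `q = g/φ'`: the result is `h` times the boundary values of `q` plus `h ∫ |q'|`.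
With `|φ'| ≥ C/2` and `|φ''| ≤ M`, `|q'| ≤ 2|g'|/C + 4M|g|/C²`. For the Gaussian `g ≤ 1`, and
since `g` increases up to `y` and decreases afterwards, `∫ |g'| ≤ 2 g(y) = 2`, uniformly in `h`.
-/

open Set MeasureTheory intervalIntegral Complex

theorem intervalIntegrable_of_continuousOn_Ioo_of_norm_le {E : Type*}
    [NormedAddCommGroup E] {f : ℝ → E} {g : ℝ → ℝ} {a b : ℝ} (hab : a ≤ b)
    (hg : IntervalIntegrable g volume a b) (hf : ContinuousOn f (Ioo a b))
    (hfg : ∀ x ∈ Ioo a b, ‖f x‖ ≤ g x) :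
    IntervalIntegrable f volume a b := by
  rw [intervalIntegrable_iff_integrableOn_Ioo_of_le hab] at hg ⊢
  exact hg.mono' (hf.aestronglyMeasurable measurableSet_Ioo)
    ((ae_restrict_iff' measurableSet_Ioo).2 (.of_forall hfg))

theorem integral_abs_deriv_eq_of_nonneg_of_nonpos {f f' : ℝ → ℝ} {a b c : ℝ}
    (hac : a ≤ c) (hcb : c ≤ b) (hf : ∀ x ∈ Icc a b, HasDerivAt f (f' x) x)
    (hf' : IntervalIntegrable f' volume a b)
    (hpos : ∀ x ∈ Icc a c, 0 ≤ f' x) (hneg : ∀ x ∈ Icc c b, f' x ≤ 0) :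
    ∫ x in a..b, |f' x| = 2 * f c - f a - f b := by
  have hab : uIcc a b = Icc a b := uIcc_of_le (hac.trans hcb)
  have hac' : uIcc a c ⊆ uIcc a b := by rw [hab, uIcc_of_le hac]; exact Icc_subset_Icc_right hcb
  have hcb' : uIcc c b ⊆ uIcc a b := by rw [hab, uIcc_of_le hcb]; exact Icc_subset_Icc_left hac
  have hleft : ∫ x in a..c, |f' x| = f c - f a := by
    rw [integral_congr fun x hx => abs_of_nonneg (hpos x (by rwa [uIcc_of_le hac] at hx))]
    exact integral_eq_sub_of_hasDerivAt (fun x hx => hf x (hab ▸ hac' hx)) (hf'.mono_set hac')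
  have hright : ∫ x in c..b, |f' x| = f c - f b := by
    rw [integral_congr fun x hx => abs_of_nonpos (hneg x (by rwa [uIcc_of_le hcb] at hx)),
      intervalIntegral.integral_neg,
      integral_eq_sub_of_hasDerivAt (fun x hx => hf x (hab ▸ hcb' hx))
        (hf'.mono_set hcb'), neg_sub]
  rw [← integral_add_adjacent_intervals (hf'.abs.mono_set hac') (hf'.abs.mono_set hcb'),
    hleft, hright]
  ring

theorem abs_div_sub_mul_div_sq_le {g g' ψ ψ' c M : ℝ} (hc : 0 < c) (hψ : c ≤ |ψ|)
    (hψ' : |ψ'| ≤ M) :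
    |g' / ψ - g * ψ' / ψ ^ 2| ≤ |g'| / c + |g| * M / c ^ 2 := by
  have hψ0 : 0 < |ψ| := hc.trans_le hψ
  calc |g' / ψ - g * ψ' / ψ ^ 2| ≤ |g'| / |ψ| + |g| * |ψ'| / |ψ| ^ 2 := by
        rw [← abs_div, ← abs_pow, ← abs_mul, ← abs_div]
        exact abs_sub _ _
    _ ≤ |g'| / c + |g| * M / c ^ 2 := by
        gcongr
        exact mul_nonneg (abs_nonneg g) ((abs_nonneg ψ').trans hψ')

theorem norm_integral_mul_deriv_mul_cexp_I_mul_div_le {a b h : ℝ} (hab : a ≤ b) (hh : 0 < h)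
    {φ ψ B : ℝ → ℝ} {q q' : ℝ → ℂ}
    (hφ : ContinuousOn φ (Icc a b)) (hφψ : ∀ x ∈ Ioo a b, HasDerivAt φ (ψ x) x)
    (hψ : ContinuousOn ψ (Icc a b))
    (hq : ContinuousOn q (Icc a b)) (hqq' : ∀ x ∈ Ioo a b, HasDerivAt q (q' x) x)
    (hq' : ContinuousOn q' (Ioo a b)) (hq'B : ∀ x ∈ Ioo a b, ‖q' x‖ ≤ B x)
    (hB : IntervalIntegrable B volume a b) :
    ‖∫ x in a..b, q x * ψ x * cexp (I * φ x / h)‖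
      ≤ h * (‖q a‖ + ‖q b‖ + ∫ x in a..b, B x) := by
  have hq'int := intervalIntegrable_of_continuousOn_Ioo_of_norm_le hab hB hq' hq'B
  set e : ℝ → ℂ := fun x => cexp (I * φ x / h)
  have he_norm : ∀ x, ‖e x‖ = 1 := fun x => by
    simpa only [e, mul_div_assoc, ← ofReal_div] using norm_exp_I_mul_ofReal (φ x / h)
  have he : ContinuousOn e (Icc a b) := by fun_prop
  have hee' : ∀ x ∈ Ioo a b, HasDerivAt e (I / h * (ψ x * e x)) x := fun x hx => by
    convert (((hφψ x hx).ofReal_comp.const_mul I).div_const (h : ℂ)).cexp using 1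
    ring
  have hparts := integral_mul_deriv_eq_deriv_mul_of_hasDerivAt (u := q) (v := e) (u' := q')
    (v' := fun x => I / h * (ψ x * e x))
    (by rwa [uIcc_of_le hab]) (by rwa [uIcc_of_le hab])
    (by simpa only [min_eq_left hab, max_eq_right hab] using hqq')
    (by simpa only [min_eq_left hab, max_eq_right hab] using hee') hq'int
    (((ContinuousOn.mul (by fun_prop) he).const_smul (I / h)).intervalIntegrable_of_Icc hab)
  have hh' : (h : ℂ) ≠ 0 := ofReal_ne_zero.2 hh.ne'
  have hrepr : ∫ x in a..b, q x * ψ x * e x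
      = h / I * (q b * e b - q a * e a - ∫ x in a..b, q' x * e x) := by
    rw [← hparts, ← intervalIntegral.integral_const_mul]
    congr 1 with x
    field_simp
  calc ‖∫ x in a..b, q x * ψ x * e x‖
      ≤ h * (‖q b‖ + ‖q a‖ + ‖∫ x in a..b, q' x * e x‖) := by
        rw [hrepr, norm_mul, norm_div, norm_I, div_one, norm_real, Real.norm_of_nonneg hh.le]
        gcongr
        refine (norm_sub_le _ _).trans (add_le_add_left ((norm_sub_le _ _).trans ?_) _)
        simp only [norm_mul, he_norm, mul_one, le_refl]
    _ ≤ h * (‖q a‖ + ‖q b‖ + ∫ x in a..b, B x) := by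
        rw [add_comm ‖q b‖]
        gcongr
        refine norm_integral_le_of_norm_le hab ((ae_restrict_iff' measurableSet_Ioc).1 ?_) hB
        rw [← restrict_Ioo_eq_restrict_Ioc]
        filter_upwards [ae_restrict_mem measurableSet_Ioo] with x hx
        rw [norm_mul, he_norm, mul_one]
        exact hq'B x hx

theorem norm_integral_mul_cexp_I_mul_div_le {a b h c M : ℝ} (hab : a ≤ b) (hh : 0 < h)
    (hc : 0 < c) {g g' φ ψ ψ' : ℝ → ℝ}
    (hg : ∀ x ∈ Icc a b, HasDerivAt g (g' x) x) (hg' : ContinuousOn g' (Icc a b))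
    (hφ : ∀ x ∈ Icc a b, HasDerivAt φ (ψ x) x) (hψ : ContinuousOn ψ (Icc a b))
    (hψψ' : ∀ x ∈ Ioo a b, HasDerivAt ψ (ψ' x) x) (hψ' : ContinuousOn ψ' (Ioo a b))
    (hψc : ∀ x ∈ Icc a b, c ≤ |ψ x|) (hψ'M : ∀ x ∈ Ioo a b, |ψ' x| ≤ M) :
    ‖∫ x in a..b, (g x : ℂ) * cexp (I * φ x / h)‖
      ≤ h * ((|g a| + |g b| + ∫ x in a..b, |g' x|) / c + M / c ^ 2 * ∫ x in a..b, |g x|) := by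
  have hIoo : Ioo a b ⊆ Icc a b := Ioo_subset_Icc_self
  have hψ0 : ∀ x ∈ Icc a b, ψ x ≠ 0 := fun x hx => abs_pos.1 (hc.trans_le (hψc x hx))
  have hgc : ContinuousOn g (Icc a b) := fun x hx => (hg x hx).continuousAt.continuousWithinAt
  have hqq' : ∀ x ∈ Ioo a b, HasDerivAt (fun x => ((g x / ψ x : ℝ) : ℂ))
      ((g' x / ψ x - g x * ψ' x / ψ x ^ 2 : ℝ) : ℂ) x := fun x hx => by
    convert ((hg x (hIoo hx)).div (hψψ' x hx) (hψ0 x (hIoo hx))).ofReal_comp using 2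
    · rfl
    · field_simp [hψ0 x (hIoo hx)]
  have hq'B : ∀ x ∈ Ioo a b, ‖((g' x / ψ x - g x * ψ' x / ψ x ^ 2 : ℝ) : ℂ)‖
      ≤ |g' x| / c + |g x| * M / c ^ 2 := fun x hx =>
    (norm_real _).trans_le (abs_div_sub_mul_div_sq_le hc (hψc x (hIoo hx)) (hψ'M x hx))
  have hB : IntervalIntegrable (fun x => |g' x| / c + |g x| * M / c ^ 2) volume a b :=
    ((hg'.abs.div_const c).add ((hgc.abs.mul_const M).div_const _)).intervalIntegrable_of_Icc hab
  have hq' : ContinuousOn (fun x => ((g' x / ψ x - g x * ψ' x / ψ x ^ 2 : ℝ) : ℂ)) (Ioo a b) := by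
    refine continuous_ofReal.comp_continuousOn (((hg'.mono hIoo).div (hψ.mono hIoo) ?_).sub
      (((hgc.mono hIoo).mul hψ').div ((hψ.mono hIoo).pow 2) ?_)) <;>
    intro x hx <;> simp [hψ0 x (hIoo hx)]
  have hrepr : ∫ x in a..b, (g x : ℂ) * cexp (I * φ x / h)
      = ∫ x in a..b, ((g x / ψ x : ℝ) : ℂ) * ψ x * cexp (I * φ x / h) := by
    refine integral_congr fun x hx => ?_
    rw [uIcc_of_le hab] at hx
    push_cast
    field_simp [hψ0 x hx]
  have hend : ∀ x ∈ Icc a b, ‖((g x / ψ x : ℝ) : ℂ)‖ ≤ |g x| / c := fun x hx => by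
    rw [norm_real, Real.norm_eq_abs, abs_div]
    exact div_le_div_of_nonneg_left (abs_nonneg _) hc (hψc x hx)
  have hB_eq : ∫ x in a..b, (|g' x| / c + |g x| * M / c ^ 2)
      = (∫ x in a..b, |g' x|) / c + M / c ^ 2 * ∫ x in a..b, |g x| := by
    rw [intervalIntegral.integral_add ((hg'.abs.div_const c).intervalIntegrable_of_Icc hab)
      (((hgc.abs.mul_const M).div_const _).intervalIntegrable_of_Icc hab),
      intervalIntegral.integral_div, intervalIntegral.integral_div,
      intervalIntegral.integral_mul_const]
    ring
  rw [hrepr]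
  refine (norm_integral_mul_deriv_mul_cexp_I_mul_div_le hab hh
    (fun x hx => (hφ x hx).continuousAt.continuousWithinAt) (fun x hx => hφ x (hIoo hx)) hψ
    (continuous_ofReal.comp_continuousOn (hgc.div hψ hψ0)) hqq' hq' hq'B hB).trans ?_
  rw [hB_eq]
  gcongr h * ?_
  calc _ ≤ |g a| / c + |g b| / c
        + ((∫ x in a..b, |g' x|) / c + M / c ^ 2 * ∫ x in a..b, |g x|) := by
        gcongr
        · exact hend a (left_mem_Icc.2 hab)
        · exact hend b (right_mem_Icc.2 hab)
    _ = _ := by ring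

theorem hasDerivAt_exp_neg_sq_div (y h z : ℝ) :
    HasDerivAt (fun z => Real.exp (-(z - y) ^ 2 / (4 * h)))
      (-(z - y) / (2 * h) * Real.exp (-(z - y) ^ 2 / (4 * h))) z := by
  convert ((((hasDerivAt_id' z).sub_const y).fun_pow 2).fun_neg.div_const (4 * h)).exp using 1
  ring

theorem abs_exp_neg_sq_div_le_one (y z : ℝ) {h : ℝ} (hh : 0 ≤ h) :
    |Real.exp (-(z - y) ^ 2 / (4 * h))| ≤ 1 := by
  rw [Real.abs_exp, Real.exp_le_one_iff]
  exact div_nonpos_of_nonpos_of_nonneg (neg_nonpos.2 (sq_nonneg _)) (by positivity)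

theorem integral_abs_deriv_exp_neg_sq_div_le {a b y h : ℝ} (hay : a ≤ y) (hyb : y ≤ b)
    (hh : 0 < h) :
    ∫ z in a..b, |-(z - y) / (2 * h) * Real.exp (-(z - y) ^ 2 / (4 * h))| ≤ 2 := by
  rw [integral_abs_deriv_eq_of_nonneg_of_nonpos hay hyb
    (fun z _ => hasDerivAt_exp_neg_sq_div y h z)
    ((by fun_prop : Continuous _).intervalIntegrable _ _)
    (fun z hz => mul_nonneg (div_nonneg (by linarith [hz.2]) (by positivity)) (Real.exp_pos _).le)
    (fun z hz => mul_nonpos_of_nonpos_of_nonneg (div_nonpos_of_nonpos_of_nonneg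
      (by linarith [hz.1]) (by positivity)) (Real.exp_pos _).le)]
  rw [show -(y - y) ^ 2 / (4 * h) = 0 by ring, Real.exp_zero]
  linarith [Real.exp_pos (-(a - y) ^ 2 / (4 * h)), Real.exp_pos (-(b - y) ^ 2 / (4 * h))]

open intervalIntegral in
/-- Non-stationary phase, one integration by parts: if `φ` is `C²` on `[y-a, y+a]`
with `|φ'| ≥ C/2 > 0` and `|φ''| ≤ M` there, then
`|∫_{y-a}^{y+a} exp(-(z-y)²/(4h)) · exp(iφ(z)/h) dz| = O(h)` as `h → 0⁺`. -/
theorem stmt4 (y a C M : ℝ) (ha : 0 < a) (hC : 0 < C) (φ : ℝ → ℝ)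
    (hφ : ContDiffOn ℝ 2 φ (Set.Icc (y - a) (y + a)))
    (hφ' : ∀ z ∈ Set.Icc (y - a) (y + a), C / 2 ≤ |deriv φ z|)
    (hφ'' : ∀ z ∈ Set.Icc (y - a) (y + a), |deriv (deriv φ) z| ≤ M) :
    ∃ K δ : ℝ, 0 < K ∧ 0 < δ ∧ ∀ h : ℝ, 0 < h → h < δ →
      ‖∫ z in (y - a)..(y + a),
          (Real.exp (-(z - y)^2 / (4 * h)) : ℂ) * Complex.exp (Complex.I * φ z / h)‖
        ≤ K * h := by
  have hab : y - a < y + a := by linarith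
  have hM : 0 ≤ M := (abs_nonneg _).trans (hφ'' y ⟨by linarith, by linarith⟩)
  have hφd : ∀ z ∈ Icc (y - a) (y + a), HasDerivAt φ (deriv φ z) z := fun z hz =>
    (differentiableAt_of_deriv_ne_zero (abs_pos.1 ((half_pos hC).trans_le (hφ' z hz)))).hasDerivAt
  have hφ'c : ContinuousOn (deriv φ) (Icc (y - a) (y + a)) :=
    (hφ.continuousOn_derivWithin (uniqueDiffOn_Icc hab) one_le_two).congr fun z hz =>
      ((hφd z hz).differentiableAt.derivWithin ((uniqueDiffOn_Icc hab) z hz)).symm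
  have hφ'C1 : ContDiffOn ℝ 1 (deriv φ) (Ioo (y - a) (y + a)) :=
    (hφ.mono Ioo_subset_Icc_self).deriv_of_isOpen isOpen_Ioo (by norm_num)
  refine ⟨8 / C + 8 * a * M / C ^ 2, 1, by positivity, one_pos, fun h hh _ => ?_⟩
  refine (norm_integral_mul_cexp_I_mul_div_le hab.le hh (half_pos hC)
    (fun z _ => hasDerivAt_exp_neg_sq_div y h z) (by fun_prop) hφd hφ'c
    (fun z hz => ((hφ'C1.differentiableOn one_ne_zero).differentiableAt
      (isOpen_Ioo.mem_nhds hz)).hasDerivAt)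
    (hφ'C1.continuousOn_deriv_of_isOpen isOpen_Ioo le_rfl) hφ'
    (fun z hz => hφ'' z (Ioo_subset_Icc_self hz))).trans ?_
  have hg_int : ∫ z in (y - a)..(y + a), |Real.exp (-(z - y) ^ 2 / (4 * h))| ≤ 2 * a :=
    (integral_mono_on hab.le ((by fun_prop : Continuous _).intervalIntegrable _ _)
      intervalIntegrable_const
      fun z _ => abs_exp_neg_sq_div_le_one y z hh.le).trans_eq (by simp only [intervalIntegral.integral_const, smul_eq_mul, mul_one]; ring)
  calc _ ≤ h * ((1 + 1 + 2) / (C / 2) + M / (C / 2) ^ 2 * (2 * a)) := by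
        gcongr
        · exact abs_exp_neg_sq_div_le_one y _ hh.le
        · exact abs_exp_neg_sq_div_le_one y _ hh.le
        · exact integral_abs_deriv_exp_neg_sq_div_le (by linarith) (by linarith) hh
    _ = (8 / C + 8 * a * M / C ^ 2) * h := by
        field_simp
        ring
end

section
/- Let λ = 1/2, A : S¹ → ℝ continuous, and define u(x) = sup over a ∈ {1,2}^ℕ of s(x,a), where s(x,a) = Σ_{k=0}^∞ (1/2)^k A((τ_{a_k} ∘ ⋯ ∘ τ_{a_0})(x)). Then u is a (1/2)-calibrated plus-subaction: for all z ∈ S¹, u(z) = max over y with f(y) = z of ((1/2)u(y) + A(y)), where f(z) = 2z mod 1. -/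
/-!
Splitting off the first symbol of `a` gives `s(x, a) = A(τ_{a₀} x) + ½ s(τ_{a₀} x, σ a)`, where
`σ` is the shift. Since every sequence is `i :: b` for a unique pair `(i, b)`, taking the supremum
over `a` first over the tail `b` and then over the first symbol `i` yields the calibrated
equation. All series converge absolutely because a continuous periodic `A` is bounded.
-/

/-- The inverse branches `τ₁(x) = x/2` and `τ₂(x) = x/2 + 1/2` of the doubling map,
indexed by `Fin 2`. -/
noncomputable def branch (i : Fin 2) (x : ℝ) : ℝ := x / 2 + (i : ℕ) / 2

/-- `branchComp a x k = (τ_{a_k} ∘ ⋯ ∘ τ_{a_0})(x)`. -/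
noncomputable def branchComp (a : ℕ → Fin 2) (x : ℝ) : ℕ → ℝ
  | 0 => branch (a 0) x
  | k + 1 => branch (a (k + 1)) (branchComp a x k)

/-- `s(x,a) = Σ_k (1/2)^k A((τ_{a_k}∘⋯∘τ_{a_0})(x))`. -/
noncomputable def sFun (A : ℝ → ℝ) (x : ℝ) (a : ℕ → Fin 2) : ℝ :=
  ∑' k : ℕ, (1 / 2 : ℝ) ^ k * A (branchComp a x k)

@[simp] lemma branch_zero (x : ℝ) : branch 0 x = x / 2 := by simp [branch]

@[simp] lemma branch_one (x : ℝ) : branch 1 x = x / 2 + 1 / 2 := by norm_num [branch]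

lemma branchComp_succ' (a : ℕ → Fin 2) (x : ℝ) (k : ℕ) :
    branchComp a x (k + 1) = branchComp (fun n => a (n + 1)) (branch (a 0) x) k := by
  induction k with
  | zero => rfl
  | succ k ih => rw [branchComp, ih]; rfl

section Bounded

variable {A : ℝ → ℝ} {C : ℝ}

lemma norm_sFun_term_le (hC : ∀ x, |A x| ≤ C) (x : ℝ) (a : ℕ → Fin 2) (k : ℕ) :
    ‖(1 / 2 : ℝ) ^ k * A (branchComp a x k)‖ ≤ (1 / 2 : ℝ) ^ k * C := by
  rw [norm_mul, norm_pow, Real.norm_eq_abs, Real.norm_eq_abs, abs_of_pos one_half_pos]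
  exact mul_le_mul_of_nonneg_left (hC _) (by positivity)

lemma summable_sFun_term (hC : ∀ x, |A x| ≤ C) (x : ℝ) (a : ℕ → Fin 2) :
    Summable (fun k => (1 / 2 : ℝ) ^ k * A (branchComp a x k)) :=
  .of_norm_bounded (summable_geometric_two.mul_right C) (norm_sFun_term_le hC x a)

lemma sFun_le (hC : ∀ x, |A x| ≤ C) (x : ℝ) (a : ℕ → Fin 2) : sFun A x a ≤ 2 * C :=
  calc sFun A x a ≤ ∑' k : ℕ, (1 / 2 : ℝ) ^ k * C :=
        (summable_sFun_term hC x a).tsum_le_tsum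
          (fun k => (Real.le_norm_self _).trans (norm_sFun_term_le hC x a k))
          (summable_geometric_two.mul_right C)
    _ = 2 * C := by rw [tsum_mul_right, tsum_geometric_two]

lemma bddAbove_range_sFun (hC : ∀ x, |A x| ≤ C) (x : ℝ) : BddAbove (Set.range (sFun A x)) :=
  ⟨2 * C, Set.forall_mem_range.2 (sFun_le hC x)⟩

lemma sFun_eq_add_sFun_tail (hC : ∀ x, |A x| ≤ C) (x : ℝ) (a : ℕ → Fin 2) :
    sFun A x a = A (branch (a 0) x) + 1 / 2 * sFun A (branch (a 0) x) (fun n => a (n + 1)) := by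
  rw [sFun, (summable_sFun_term hC x a).tsum_eq_zero_add, sFun, ← tsum_mul_left]
  congr 1
  · simp [branchComp]
  · refine tsum_congr fun k => ?_
    rw [branchComp_succ', pow_succ]
    ring

lemma sFun_cons (hC : ∀ x, |A x| ≤ C) (x : ℝ) (i : Fin 2) (b : ℕ → Fin 2) :
    sFun A x (Stream'.cons i b) = A (branch i x) + 1 / 2 * sFun A (branch i x) b :=
  sFun_eq_add_sFun_tail hC x (Stream'.cons i b)

lemma iSup_sFun_eq_max (hC : ∀ x, |A x| ≤ C) (x : ℝ) :
    ⨆ a, sFun A x a = max (1 / 2 * (⨆ a, sFun A (branch 0 x) a) + A (branch 0 x))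
      (1 / 2 * (⨆ a, sFun A (branch 1 x) a) + A (branch 1 x)) := by
  set g : Fin 2 → ℝ := fun i => 1 / 2 * (⨆ a, sFun A (branch i x) a) + A (branch i x)
  have g_le_max (i : Fin 2) : g i ≤ max (g 0) (g 1) := by fin_cases i <;> simp
  have g_le_iSup (i : Fin 2) : g i ≤ ⨆ a, sFun A x a := by
    have : ⨆ b, sFun A (branch i x) b ≤ 2 * ((⨆ a, sFun A x a) - A (branch i x)) :=
      ciSup_le fun b => by
        have := le_ciSup (bddAbove_range_sFun hC x) (Stream'.cons i b)
        rw [sFun_cons hC] at this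
        linarith
    dsimp only [g]
    linarith
  refine le_antisymm (ciSup_le fun a => ?_) (max_le (g_le_iSup 0) (g_le_iSup 1))
  have tail_le := le_ciSup (bddAbove_range_sFun hC (branch (a 0) x)) (fun n => a (n + 1))
  calc sFun A x a = A (branch (a 0) x) + 1 / 2 * sFun A (branch (a 0) x) (fun n => a (n + 1)) :=
        sFun_eq_add_sFun_tail hC x a
    _ ≤ g (a 0) := by dsimp only [g]; linarith
    _ ≤ max (g 0) (g 1) := g_le_max (a 0)

end Bounded

/-- `u(x) = sup_a s(x,a)` is a `(1/2)`-calibrated plus-subaction: for all `z ∈ [0,1)`,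
`u(z) = max_{f(y)=z} ((1/2)u(y) + A(y))`, the two preimages of `z` under the doubling
map being `z/2` and `z/2 + 1/2`. -/
theorem stmt11 (A : ℝ → ℝ) (hA : Continuous A) (hAp : Function.Periodic A 1) :
    ∀ z ∈ Set.Ico (0 : ℝ) 1,
      (⨆ a : ℕ → Fin 2, sFun A z a)
        = max ((1 / 2) * (⨆ a : ℕ → Fin 2, sFun A (z / 2) a) + A (z / 2))
              ((1 / 2) * (⨆ a : ℕ → Fin 2, sFun A (z / 2 + 1 / 2) a) + A (z / 2 + 1 / 2)) := by
  obtain ⟨C, hC⟩ := isBounded_iff_forall_norm_le.1 (hAp.isBounded_of_continuous one_ne_zero hA)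
  intro z _
  simpa using iSup_sFun_eq_max (C := C) (fun x => hC _ ⟨x, rfl⟩) z
end
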